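/- For every partition λ = (λ_1 ≥ λ_2 ≥ ... ≥ λ_n ≥ 0) and ρ_m = (m, m−1, ..., 1): P^L_{ρ_{n−1}+λ}(x_1,...,x_n|b) = ( ∏_{1≤i<j≤n} (x_i +_F x_j) ) · s^L_λ(x_1,...,x_n|b) and Q^L_{ρ_n+λ}(x_1,...,x_n|b) = ( ∏_{1≤i≤j≤n} (x_i +_F x_j) ) · s^L_λ(x_1,...,x_n|b). -/

import Mathlib

/-! Since `λ + ρ_{n-1}` has at least `n - 1` nonzero parts, the factor `1/(n-r)!` is `1` and the
double products in `P^L` (and in `Q^L`, where `r = n`) run over all pairs `i < j`. As `F` is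
commutative, `∏_{i<j} (x_{w i} +_F x_{w j})` does not depend on `w ∈ S_n`, so it factors out of the
symmetrization. For `Q^L`, `[[t|b]]^{k+1} = (t +_F t)·[t|b]^k` contributes the remaining diagonal
factors `∏_i (x_i +_F x_i)`. -/

/- ## Formal group laws, coefficientwise substitution, universal Schur P,Q-functions -/

noncomputable section

open Finset MvPowerSeries

/-- Substitution of two power series (with zero constant term) into a two-variable
series `∑ a i j * u^i * v^j`, computed coefficientwise. -/
def fadd {L : Type} [CommRing L] {σ : Type} (a : ℕ → ℕ → L)
    (X Y : MvPowerSeries σ L) : MvPowerSeries σ L :=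
  fun d => ∑ p ∈ Finset.range ((d.sum fun _ n => n) + 1) ×ˢ
      Finset.range ((d.sum fun _ n => n) + 1),
    a p.1 p.2 * MvPowerSeries.coeff (R := L) d (X ^ p.1 * Y ^ p.2)

/-- Substitution of a power series (with zero constant term) into a one-variable
series `∑ c k * u^k`, computed coefficientwise. -/
def fsub1 {L : Type} [CommRing L] {σ : Type} (c : ℕ → L)
    (X : MvPowerSeries σ L) : MvPowerSeries σ L :=
  fun d => ∑ k ∈ Finset.range ((d.sum fun _ n => n) + 1),
    c k * MvPowerSeries.coeff (R := L) d (X ^ k)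

/-- Substitution `x_i ↦ v i` in a multivariate power series, computed coefficientwise;
meaningful when every `v i` has zero constant term. -/
def msubst {L : Type} [CommRing L] {σ τ : Type} (v : σ → MvPowerSeries τ L)
    (f : MvPowerSeries σ L) : MvPowerSeries τ L :=
  fun d => ∑ᶠ e : σ →₀ ℕ,
    MvPowerSeries.coeff (R := L) e f * MvPowerSeries.coeff (R := L) d (e.prod fun i k => v i ^ k)

/-- A one-dimensional commutative formal group law over `L` together with its
formal inverse series; the axioms are stated for substitution of arbitrary
power series with zero constant term. -/
structure FGL (L : Type) [CommRing L] where
  /-- the coefficients `a i j` of `F(u,v) = ∑ a i j · u^i v^j` -/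
  a : ℕ → ℕ → L
  /-- the coefficients of the formal inverse `χ(u) = ∑ ch k · u^k` -/
  ch : ℕ → L
  ch_zero : ch 0 = 0
  add_zero' : ∀ {σ : Type} (X : MvPowerSeries σ L),
    MvPowerSeries.constantCoeff (σ := σ) (R := L) X = 0 → fadd a X 0 = X
  comm' : ∀ {σ : Type} (X Y : MvPowerSeries σ L),
    MvPowerSeries.constantCoeff (σ := σ) (R := L) X = 0 → MvPowerSeries.constantCoeff (σ := σ) (R := L) Y = 0 →
      fadd a X Y = fadd a Y X
  assoc' : ∀ {σ : Type} (X Y Z : MvPowerSeries σ L),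
    MvPowerSeries.constantCoeff (σ := σ) (R := L) X = 0 → MvPowerSeries.constantCoeff (σ := σ) (R := L) Y = 0 →
      MvPowerSeries.constantCoeff (σ := σ) (R := L) Z = 0 →
      fadd a (fadd a X Y) Z = fadd a X (fadd a Y Z)
  add_inv' : ∀ {σ : Type} (X : MvPowerSeries σ L),
    MvPowerSeries.constantCoeff (σ := σ) (R := L) X = 0 → fadd a X (fsub1 ch X) = 0

/-- The formal inverse `X ↦ \bar X` associated to a formal group law. -/
def FGL.neg {L : Type} [CommRing L] (G : FGL L) {σ : Type}
    (X : MvPowerSeries σ L) : MvPowerSeries σ L := fsub1 G.ch X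

variable {L : Type} [CommRing L] {σ : Type}

/-- `[t|b]^k = ∏_{i=1}^k (t +_F b_i)` (here `bs i` stands for `b_{i+1}`). -/
def facPow (G : FGL L) (t : MvPowerSeries σ L) (bs : ℕ → MvPowerSeries σ L) (k : ℕ) :
    MvPowerSeries σ L :=
  ∏ i ∈ Finset.range k, fadd G.a t (bs i)

/-- `[[t|b]]^k`: `[[t|b]]^0 = 1` and `[[t|b]]^k = (t +_F t)·[t|b]^{k-1}` for `k ≥ 1`. -/
def facPowQ (G : FGL L) (t : MvPowerSeries σ L) (bs : ℕ → MvPowerSeries σ L) :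
    ℕ → MvPowerSeries σ L
  | 0 => 1
  | (k + 1) => fadd G.a t t * facPow G t bs k

instance mvPowerSeries_isDomain [IsDomain L] : IsDomain (MvPowerSeries σ L) :=
  NoZeroDivisors.to_isDomain _

/-- `lam` is a strict partition (written with trailing zeros): entries strictly
decrease until they reach `0`. -/
def IsSP {n : ℕ} (lam : Fin n → ℕ) : Prop :=
  ∀ i j : Fin n, i < j → (lam j < lam i ∨ (lam i = 0 ∧ lam j = 0))

/-- The length (number of nonzero parts) of a partition written with trailing zeros. -/
def spLen {n : ℕ} (lam : Fin n → ℕ) : ℕ :=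
  (Finset.univ.filter fun i => lam i ≠ 0).card

variable [IsDomain L] [CharZero L]

/-- The universal factorial Schur P-function
`P^L_λ(x_1,…,x_n|b) = (1/(n-r)!) ∑_{w∈S_n} w[ [x|b]^λ ∏_{i=1}^r ∏_{j=i+1}^n (x_i +_F x_j)/(x_i +_F \bar x_j) ]`
(for a strict partition `λ` of length `r ≤ n`), as an element of the fraction field
of the power series ring. -/
def PLgen (G : FGL L) (n r : ℕ) (lam : Fin n → ℕ) (x : Fin n → MvPowerSeries σ L)
    (bs : ℕ → MvPowerSeries σ L) : FractionRing (MvPowerSeries σ L) :=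
  (((n - r).factorial : FractionRing (MvPowerSeries σ L)))⁻¹ *
    ∑ w : Equiv.Perm (Fin n),
      (algebraMap (MvPowerSeries σ L) (FractionRing (MvPowerSeries σ L))
        ((∏ i : Fin n, facPow G (x (w i)) bs (lam i)) *
          ∏ i ∈ Finset.univ.filter (fun i : Fin n => (i : ℕ) < r), ∏ j ∈ Finset.Ioi i,
            fadd G.a (x (w i)) (x (w j)))) /
      (algebraMap (MvPowerSeries σ L) (FractionRing (MvPowerSeries σ L))
        (∏ i ∈ Finset.univ.filter (fun i : Fin n => (i : ℕ) < r), ∏ j ∈ Finset.Ioi i,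
          fadd G.a (x (w i)) (G.neg (x (w j)))))

/-- The universal factorial Schur Q-function, defined like `PLgen` with
`[[x|b]]^λ` in place of `[x|b]^λ`. -/
def QLgen (G : FGL L) (n r : ℕ) (lam : Fin n → ℕ) (x : Fin n → MvPowerSeries σ L)
    (bs : ℕ → MvPowerSeries σ L) : FractionRing (MvPowerSeries σ L) :=
  (((n - r).factorial : FractionRing (MvPowerSeries σ L)))⁻¹ *
    ∑ w : Equiv.Perm (Fin n),
      (algebraMap (MvPowerSeries σ L) (FractionRing (MvPowerSeries σ L))
        ((∏ i : Fin n, facPowQ G (x (w i)) bs (lam i)) *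
          ∏ i ∈ Finset.univ.filter (fun i : Fin n => (i : ℕ) < r), ∏ j ∈ Finset.Ioi i,
            fadd G.a (x (w i)) (x (w j)))) /
      (algebraMap (MvPowerSeries σ L) (FractionRing (MvPowerSeries σ L))
        (∏ i ∈ Finset.univ.filter (fun i : Fin n => (i : ℕ) < r), ∏ j ∈ Finset.Ioi i,
          fadd G.a (x (w i)) (G.neg (x (w j)))))

/-- `s^L_λ(x_1,…,x_n|b) = ∑_{w∈S_n} w[ [x|b]^{λ+ρ_{n-1}} / ∏_{i<j} (x_i +_F \bar x_j) ]`. -/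
def sLgen (G : FGL L) (n : ℕ) (lam : Fin n → ℕ) (x : Fin n → MvPowerSeries σ L)
    (bs : ℕ → MvPowerSeries σ L) : FractionRing (MvPowerSeries σ L) :=
  ∑ w : Equiv.Perm (Fin n),
    (algebraMap (MvPowerSeries σ L) (FractionRing (MvPowerSeries σ L))
      (∏ i : Fin n, facPow G (x (w i)) bs (lam i + (n - 1 - (i : ℕ))))) /
    (algebraMap (MvPowerSeries σ L) (FractionRing (MvPowerSeries σ L))
      (∏ i : Fin n, ∏ j ∈ Finset.Ioi i, fadd G.a (x (w i)) (G.neg (x (w j)))))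

theorem prod_Ioi_comp_perm {α M : Type*} [Fintype α] [LinearOrder α] [LocallyFiniteOrderTop α]
    [CommMonoid M] (f : α → α → M) (hf : ∀ a b, f a b = f b a) (w : Equiv.Perm α) :
    ∏ i, ∏ j ∈ Ioi i, f (w i) (w j) = ∏ i, ∏ j ∈ Ioi i, f i j := by
  let sortBy (v : Equiv.Perm α) (p : Σ _ : α, α) : Σ _ : α, α :=
    if v p.1 < v p.2 then ⟨v p.1, v p.2⟩ else ⟨v p.2, v p.1⟩
  have sortBy_lt (v : Equiv.Perm α) (p : Σ _ : α, α) (hp : p.1 < p.2) :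
      (sortBy v p).1 < (sortBy v p).2 := by
    have hne : v p.1 ≠ v p.2 := v.injective.ne hp.ne
    unfold sortBy
    split_ifs with h
    · exact h
    · exact lt_of_le_of_ne (not_lt.mp h) hne.symm
  have sortBy_sortBy (v : Equiv.Perm α) (p : Σ _ : α, α) (hp : p.1 < p.2) :
      sortBy v⁻¹ (sortBy v p) = p := by
    unfold sortBy
    by_cases h : v p.1 < v p.2 <;> simp [h, hp, hp.not_gt]
  simp only [prod_sigma']
  refine prod_nbij' (sortBy w) (sortBy w⁻¹) ?_ ?_ ?_ ?_ ?_
  all_goals simp only [mem_sigma, mem_univ, mem_Ioi, true_and]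
  · exact sortBy_lt w
  · exact sortBy_lt w⁻¹
  · exact sortBy_sortBy w
  · simpa using sortBy_sortBy w⁻¹
  · intro p _
    unfold sortBy
    split_ifs
    · rfl
    · exact hf _ _

theorem prod_Ici_eq_prod_mul_prod_Ioi {α M : Type*} [Fintype α] [PartialOrder α]
    [LocallyFiniteOrderTop α] [CommMonoid M] (f : α → α → M) :
    ∏ i, ∏ j ∈ Ici i, f i j = (∏ i, f i i) * ∏ i, ∏ j ∈ Ioi i, f i j := by
  rw [← prod_mul_distrib]
  exact prod_congr rfl fun i _ => by rw [Ici_eq_cons_Ioi, prod_cons]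

theorem prod_filter_lt_prod_Ioi {M : Type*} [CommMonoid M] {n r : ℕ} (hr : n - 1 ≤ r)
    (g : Fin n → Fin n → M) :
    ∏ i ∈ univ.filter (fun i : Fin n => (i : ℕ) < r), ∏ j ∈ Ioi i, g i j =
      ∏ i, ∏ j ∈ Ioi i, g i j := by
  refine prod_subset (filter_subset _ _) fun i _ hi => ?_
  have : Ioi i = ∅ := by
    ext j
    simp only [mem_filter, mem_univ, true_and, not_lt] at hi
    simp only [mem_Ioi, Fin.lt_def, notMem_empty, iff_false]
    omega
  simp [this]

theorem sub_one_le_spLen_add_staircase {n : ℕ} (lam : Fin n → ℕ) :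
    n - 1 ≤ spLen fun i : Fin n => lam i + (n - 1 - (i : ℕ)) := by
  rcases n with _ | n
  · exact Nat.zero_le _
  · calc n + 1 - 1 = #(Iio (Fin.last n)) := by simp
      _ ≤ _ := card_le_card fun i hi => by
        simp only [mem_Iio, Fin.lt_last_iff_ne_last, mem_filter, mem_univ, true_and] at hi ⊢
        have := Fin.val_lt_last hi
        omega

theorem spLen_le {n : ℕ} (lam : Fin n → ℕ) : spLen lam ≤ n :=
  (card_filter_le _ _).trans_eq (card_fin n)

section Factorization

variable (G : FGL L) {n : ℕ} (lam : Fin n → ℕ) {x : Fin n → MvPowerSeries σ L}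
  (bs : ℕ → MvPowerSeries σ L)

theorem PLgen_add_staircase_eq_mul_sLgen
    (hx : ∀ i, MvPowerSeries.constantCoeff (σ := σ) (R := L) (x i) = 0) :
    PLgen G n (spLen fun i : Fin n => lam i + (n - 1 - (i : ℕ)))
        (fun i : Fin n => lam i + (n - 1 - (i : ℕ))) x bs =
      algebraMap _ _ (∏ i, ∏ j ∈ Ioi i, fadd G.a (x i) (x j)) * sLgen G n lam x bs := by
  have hr := sub_one_le_spLen_add_staircase lam
  have hrn := spLen_le fun i : Fin n => lam i + (n - 1 - (i : ℕ))
  rw [PLgen, sLgen, Nat.factorial_eq_one.mpr (by omega), Nat.cast_one, inv_one, one_mul,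
    mul_sum]
  refine sum_congr rfl fun w _ => ?_
  rw [prod_filter_lt_prod_Ioi hr, prod_filter_lt_prod_Ioi hr,
    prod_Ioi_comp_perm (fun a b => fadd G.a (x a) (x b)) (fun a b => G.comm' _ _ (hx a) (hx b)),
    map_mul]
  ring

theorem QLgen_add_staircase_eq_mul_sLgen
    (hx : ∀ i, MvPowerSeries.constantCoeff (σ := σ) (R := L) (x i) = 0) :
    QLgen G n n (fun i : Fin n => lam i + (n - (i : ℕ))) x bs =
      algebraMap _ _ (∏ i, ∏ j ∈ Ici i, fadd G.a (x i) (x j)) * sLgen G n lam x bs := by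
  have hQ (w : Equiv.Perm (Fin n)) :
      ∏ i, facPowQ G (x (w i)) bs (lam i + (n - (i : ℕ))) =
        (∏ i, fadd G.a (x i) (x i)) * ∏ i, facPow G (x (w i)) bs (lam i + (n - 1 - (i : ℕ))) := by
    rw [← Equiv.prod_comp w fun i => fadd G.a (x i) (x i), ← prod_mul_distrib]
    refine prod_congr rfl fun i _ => ?_
    rw [show lam i + (n - (i : ℕ)) = lam i + (n - 1 - (i : ℕ)) + 1 by omega]
    rfl
  rw [QLgen, sLgen, Nat.sub_self, Nat.factorial_zero, Nat.cast_one, inv_one, one_mul, mul_sum,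
    prod_Ici_eq_prod_mul_prod_Ioi]
  refine sum_congr rfl fun w _ => ?_
  rw [prod_filter_lt_prod_Ioi (Nat.sub_le n 1), prod_filter_lt_prod_Ioi (Nat.sub_le n 1),
    prod_Ioi_comp_perm (fun a b => fadd G.a (x a) (x b)) (fun a b => G.comm' _ _ (hx a) (hx b)),
    hQ, map_mul, map_mul, map_mul]
  ring

end Factorization

theorem staircase_plus_partition_factorization_general
    {L : Type} [CommRing L] [IsDomain L] [CharZero L] (G : FGL L) (n : ℕ)
    (lam : Fin n → ℕ) :
    PLgen G n (spLen fun i : Fin n => lam i + (n - 1 - (i : ℕ)))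
        (fun i : Fin n => lam i + (n - 1 - (i : ℕ)))
        (fun i => MvPowerSeries.X (Sum.inl i)) (fun j => MvPowerSeries.X (Sum.inr j)) =
      algebraMap (MvPowerSeries (Fin n ⊕ ℕ) L) (FractionRing (MvPowerSeries (Fin n ⊕ ℕ) L))
        (∏ i : Fin n, ∏ j ∈ Finset.Ioi i,
          fadd G.a (MvPowerSeries.X (Sum.inl i)) (MvPowerSeries.X (Sum.inl j))) *
      sLgen G n lam (fun i => MvPowerSeries.X (Sum.inl i)) (fun j => MvPowerSeries.X (Sum.inr j)) ∧
    QLgen G n n (fun i : Fin n => lam i + (n - (i : ℕ)))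
        (fun i => MvPowerSeries.X (Sum.inl i)) (fun j => MvPowerSeries.X (Sum.inr j)) =
      algebraMap (MvPowerSeries (Fin n ⊕ ℕ) L) (FractionRing (MvPowerSeries (Fin n ⊕ ℕ) L))
        (∏ i : Fin n, ∏ j ∈ Finset.Ici i,
          fadd G.a (MvPowerSeries.X (Sum.inl i)) (MvPowerSeries.X (Sum.inl j))) *
      sLgen G n lam (fun i => MvPowerSeries.X (Sum.inl i)) (fun j => MvPowerSeries.X (Sum.inr j)) := by
  have hx (i : Fin n) := MvPowerSeries.constantCoeff_X (R := L) (Sum.inl i : Fin n ⊕ ℕ)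
  exact ⟨PLgen_add_staircase_eq_mul_sLgen G lam _ hx, QLgen_add_staircase_eq_mul_sLgen G lam _ hx⟩

/-- Factorization: for a partition `λ = (λ_1 ≥ … ≥ λ_n ≥ 0)`,
`P^L_{ρ_{n-1}+λ}(x|b) = (∏_{i<j}(x_i +_F x_j))·s^L_λ(x|b)` and
`Q^L_{ρ_n+λ}(x|b) = (∏_{i≤j}(x_i +_F x_j))·s^L_λ(x|b)`. -/
theorem staircase_plus_partition_factorization
    {L : Type} [CommRing L] [IsDomain L] [CharZero L] (G : FGL L) (n : ℕ) (hn : 0 < n)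
    (lam : Fin n → ℕ) (hlam : Antitone lam) :
    PLgen G n (spLen fun i : Fin n => lam i + (n - 1 - (i : ℕ)))
        (fun i : Fin n => lam i + (n - 1 - (i : ℕ)))
        (fun i => MvPowerSeries.X (Sum.inl i)) (fun j => MvPowerSeries.X (Sum.inr j)) =
      algebraMap (MvPowerSeries (Fin n ⊕ ℕ) L) (FractionRing (MvPowerSeries (Fin n ⊕ ℕ) L))
        (∏ i : Fin n, ∏ j ∈ Finset.Ioi i,
          fadd G.a (MvPowerSeries.X (Sum.inl i)) (MvPowerSeries.X (Sum.inl j))) *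
      sLgen G n lam (fun i => MvPowerSeries.X (Sum.inl i)) (fun j => MvPowerSeries.X (Sum.inr j)) ∧
    QLgen G n n (fun i : Fin n => lam i + (n - (i : ℕ)))
        (fun i => MvPowerSeries.X (Sum.inl i)) (fun j => MvPowerSeries.X (Sum.inr j)) =
      algebraMap (MvPowerSeries (Fin n ⊕ ℕ) L) (FractionRing (MvPowerSeries (Fin n ⊕ ℕ) L))
        (∏ i : Fin n, ∏ j ∈ Finset.Ici i,
          fadd G.a (MvPowerSeries.X (Sum.inl i)) (MvPowerSeries.X (Sum.inl j))) *
      sLgen G n lam (fun i => MvPowerSeries.X (Sum.inl i)) (fun j => MvPowerSeries.X (Sum.inr j)) :=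
  staircase_plus_partition_factorization_general G n lam

end
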